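/- Let A ∈ ℝ^{n×n} be a Metzler matrix. Then A is Hurwitz if and only if there exists a diagonal matrix P with positive diagonal entries (P ≻ 0) such that AᵀP + PA is negative definite. -/

import Mathlib

/-!
If `A` is Metzler and Hurwitz, then for small `t > 0` the matrix `1 + t • A` is entrywise
nonnegative with spectrum inside the unit disc, so its Neumann series converges to a nonnegative
matrix `G` with `A * G = -t⁻¹ • 1`; hence `x = G *ᵥ 1` is a positive vector with `A *ᵥ x < 0`.
Doing the same for `Aᵀ` gives `z`, and with `D = diagonal (z / x)` the symmetric Metzler matrix
`Q = Aᵀ * D + D * A` satisfies `Q *ᵥ x = Aᵀ *ᵥ z + D *ᵥ (A *ᵥ x) < 0`. Writing `v = x * u`,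
`vᵀ Q v = ∑ uᵢ² xᵢ (Q x)ᵢ - ½ ∑ Qᵢⱼ xᵢ xⱼ (uᵢ - uⱼ)²`, which is negative for `v ≠ 0`.

Conversely, for an eigenvector `v` of `A` with eigenvalue `μ`,
`v* (Aᵀ P + P A) v = 2 Re μ · v* P v`, so `Re μ < 0` as soon as `P ≻ 0` and `Aᵀ P + P A ≺ 0`.
-/

open Matrix

/-- A real square matrix is *Metzler* if all its off-diagonal entries are nonnegative. -/
def Matrix.Metzler {n : ℕ} (A : Matrix (Fin n) (Fin n) ℝ) : Prop :=
  ∀ i j, i ≠ j → 0 ≤ A i j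

/-- A real square matrix is *Hurwitz* if every (complex) eigenvalue has negative real part. -/
def Matrix.Hurwitz {n : ℕ} (A : Matrix (Fin n) (Fin n) ℝ) : Prop :=
  ∀ μ ∈ spectrum ℂ (A.map (Complex.ofReal)), μ.re < 0

/-- A real square matrix is *Schur stable* if every (complex) eigenvalue lies strictly
inside the unit circle. -/
def Matrix.SchurStable {n : ℕ} (A : Matrix (Fin n) (Fin n) ℝ) : Prop :=
  ∀ μ ∈ spectrum ℂ (A.map (Complex.ofReal)), ‖μ‖ < 1

open Filter Topology

/- `z ↦ (1 - z • a)⁻¹` is analytic on the disc of radius `(spectralRadius ℂ a)⁻¹ > 1`, and its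
power series there is `∑ zᵏ aᵏ`. -/
theorem summable_pow_of_spectralRadius_lt_one {A : Type*} [NormedRing A] [NormedAlgebra ℂ A]
    [CompleteSpace A] {a : A} (h : spectralRadius ℂ a < 1) : Summable (a ^ ·) := by
  obtain ⟨r, hr1, hr⟩ := ENNReal.lt_iff_exists_nnreal_btwn.mp (ENNReal.one_lt_inv.mpr h)
  have hr0 : 0 < r := by exact_mod_cast zero_lt_one.trans hr1
  have hps := (spectrum.hasFPowerSeriesOnBall_inverse_one_sub_smul ℂ a).exchange_radius
    ((spectrum.differentiableOn_inverse_one_sub_smul hr).hasFPowerSeriesOnBall hr0)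
  exact ⟨_, by simpa using hps.hasSum (y := 1) (by simpa using hr1)⟩

theorem Complex.eventually_norm_one_add_mul_lt_one {μ : ℂ} (hμ : μ.re < 0) :
    ∀ᶠ t : ℝ in 𝓝[>] 0, ‖1 + (t : ℂ) * μ‖ < 1 := by
  have hlim : Tendsto (fun t : ℝ => 2 * μ.re + t * normSq μ) (𝓝 0) (𝓝 (2 * μ.re)) :=
    (continuous_const.add (continuous_id.mul continuous_const)).tendsto' _ _ (by simp)
  filter_upwards [nhdsWithin_le_nhds (hlim.eventually_lt_const (by linarith)),
    self_mem_nhdsWithin] with t ht (ht0 : 0 < t)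
  have hnormSq : normSq (1 + t * μ) = 1 + t * (2 * μ.re + t * normSq μ) := by
    simp only [normSq_apply, add_re, add_im, mul_re, mul_im, ofReal_re, ofReal_im, one_re, one_im]
    ring
  rw [← sq_lt_one_iff₀ (norm_nonneg _), Complex.sq_norm, hnormSq]
  nlinarith

namespace Matrix

variable {ι : Type*} [Fintype ι] {n : ℕ}

attribute [local instance] Matrix.linftyOpNormedRing Matrix.linftyOpNormedAlgebra in
theorem SchurStable.summable_pow {C : Matrix (Fin n) (Fin n) ℝ} (h : C.SchurStable) :
    Summable (C ^ ·) := by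
  rcases isEmpty_or_nonempty (Fin n) with hn | hn
  · simpa only [Subsingleton.elim _ (0 : Matrix (Fin n) (Fin n) ℝ)] using summable_zero
  have hρ : spectralRadius ℂ (C.map Complex.ofReal) < 1 := by
    exact_mod_cast spectrum.spectralRadius_lt_of_forall_lt _ (r := 1) fun z hz => by
      exact_mod_cast h z hz
  have hpow (k : ℕ) : C.map Complex.ofReal ^ k = (C ^ k).map Complex.ofReal :=
    (C.map_pow Complex.ofRealHom k).symm
  have hs := summable_pow_of_spectralRadius_lt_one hρ
  simp only [hpow] at hs
  refine Pi.summable.mpr fun i => Pi.summable.mpr fun j => ?_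
  exact Complex.summable_ofReal.mp (Pi.summable.mp (Pi.summable.mp hs i) j)

theorem Metzler.eventually_one_add_smul_nonneg {A : Matrix (Fin n) (Fin n) ℝ}
    (hA : A.Metzler) : ∀ᶠ t in 𝓝[>] (0 : ℝ), ∀ i j, 0 ≤ (1 + t • A) i j := by
  have hlim (i : Fin n) : Tendsto (fun t : ℝ => 1 + t * A i i) (𝓝 0) (𝓝 1) :=
    (continuous_const.add (continuous_id.mul continuous_const)).tendsto' _ _ (by simp)
  filter_upwards [nhdsWithin_le_nhds (eventually_all.mpr fun i =>
    (hlim i).eventually_const_lt zero_lt_one), self_mem_nhdsWithin] with t hdiag (ht : 0 < t) i j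
  rcases eq_or_ne i j with rfl | hij
  · simpa using (hdiag i).le
  · simpa [one_apply_ne hij] using mul_nonneg ht.le (hA i j hij)

theorem Hurwitz.eventually_schurStable_one_add_smul {A : Matrix (Fin n) (Fin n) ℝ}
    (hA : A.Hurwitz) : ∀ᶠ t in 𝓝[>] (0 : ℝ), (1 + t • A).SchurStable := by
  filter_upwards [(eventually_all_finite (finite_spectrum _)).mpr fun μ hμ =>
    Complex.eventually_norm_one_add_mul_lt_one (hA μ hμ), self_mem_nhdsWithin]
    with t ht (ht0 : 0 < t) ν hν
  have hmap : (1 + t • A).map Complex.ofReal = Polynomial.aeval (A.map Complex.ofReal)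
      (Polynomial.C (t : ℂ) * Polynomial.X + Polynomial.C 1) := by
    simp only [map_add, map_mul, Polynomial.aeval_C, Polynomial.aeval_X, map_one,
      ← Algebra.smul_def]
    ext i j
    simp [one_apply, apply_ite Complex.ofReal, add_comm]
  rw [hmap, spectrum.map_polynomial_aeval_of_degree_pos] at hν
  · obtain ⟨μ, hμ, rfl⟩ := hν
    simpa [add_comm] using ht μ hμ
  · rw [Polynomial.degree_linear (Complex.ofReal_ne_zero.mpr ht0.ne')]
    exact zero_lt_one

theorem Metzler.pos_of_mulVec_neg {A : Matrix (Fin n) (Fin n) ℝ} (hA : A.Metzler)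
    {x : Fin n → ℝ} (hx : ∀ j, 0 ≤ x j) {i : Fin n} (hi : (A *ᵥ x) i < 0) : 0 < x i := by
  refine (hx i).lt_of_ne fun hxi => hi.not_ge ?_
  change 0 ≤ ∑ j, A i j * x j
  refine Finset.sum_nonneg fun j _ => ?_
  rcases eq_or_ne i j with rfl | hij
  · simp [← hxi]
  · exact mul_nonneg (hA i j hij) (hx j)

theorem Metzler.exists_pos_mulVec_neg {A : Matrix (Fin n) (Fin n) ℝ} (hA : A.Metzler)
    (hH : A.Hurwitz) : ∃ x : Fin n → ℝ, (∀ i, 0 < x i) ∧ ∀ i, (A *ᵥ x) i < 0 := by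
  obtain ⟨t, hC, hS, ht : 0 < t⟩ := (hA.eventually_one_add_smul_nonneg.and
    (hH.eventually_schurStable_one_add_smul.and self_mem_nhdsWithin)).exists
  have hsum := hS.summable_pow
  set G := ∑' k, (1 + t • A) ^ k
  have hAG : A * G = -t⁻¹ • 1 := by
    calc A * G = -t⁻¹ • ((1 - (1 + t • A)) * G) := by
          rw [sub_add_cancel_left, neg_mul, smul_neg, neg_smul, neg_neg, smul_mul, smul_smul,
            inv_mul_cancel₀ ht.ne', one_smul]
      _ = -t⁻¹ • 1 := by rw [hsum.one_sub_mul_tsum_pow]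
  have hG (i j : Fin n) : 0 ≤ G i j := by
    have hrow : G i = ∑' k, ((1 + t • A) ^ k : Matrix (Fin n) (Fin n) ℝ) i := tsum_apply hsum
    rw [hrow, tsum_apply (Pi.summable.mp hsum i)]
    exact tsum_nonneg fun k => pow_apply_nonneg hC k i j
  have hAx (i : Fin n) : (A *ᵥ (G *ᵥ 1)) i < 0 := by
    simp [mulVec_mulVec, hAG, neg_mulVec, smul_mulVec, ht]
  have hx (j : Fin n) : 0 ≤ (G *ᵥ 1) j := by
    simpa [mulVec, dotProduct] using Finset.sum_nonneg fun k _ => hG j k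
  exact ⟨G *ᵥ 1, fun i => hA.pos_of_mulVec_neg hx (hAx i), hAx⟩

theorem IsSymm.dotProduct_mul_mulVec_mul {Q : Matrix ι ι ℝ} (hQ : Q.IsSymm) (x u : ι → ℝ) :
    (x * u) ⬝ᵥ (Q *ᵥ (x * u)) =
      ∑ i, u i ^ 2 * x i * (Q *ᵥ x) i - (∑ i, ∑ j, Q i j * x i * x j * (u i - u j) ^ 2) / 2 := by
  have hswap : ∑ i, ∑ j, Q i j * x i * x j * u j ^ 2 = ∑ i, ∑ j, Q i j * x i * x j * u i ^ 2 := by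
    rw [Finset.sum_comm]
    refine Finset.sum_congr rfl fun i _ => Finset.sum_congr rfl fun j _ => ?_
    rw [hQ.apply i j]
    ring
  have hexpand : ∑ i, ∑ j, Q i j * x i * x j * (u i - u j) ^ 2 =
      ∑ i, ∑ j, Q i j * x i * x j * u i ^ 2 + ∑ i, ∑ j, Q i j * x i * x j * u j ^ 2
        - 2 * ∑ i, ∑ j, Q i j * (x i * u i) * (x j * u j) := by
    simp only [Finset.mul_sum, ← Finset.sum_add_distrib, ← Finset.sum_sub_distrib]
    refine Finset.sum_congr rfl fun i _ => Finset.sum_congr rfl fun j _ => ?_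
    ring
  have hdiag : ∑ i, u i ^ 2 * x i * (Q *ᵥ x) i = ∑ i, ∑ j, Q i j * x i * x j * u i ^ 2 := by
    simp only [mulVec, dotProduct, Finset.mul_sum]
    refine Finset.sum_congr rfl fun i _ => Finset.sum_congr rfl fun j _ => ?_
    ring
  have hcross : (x * u) ⬝ᵥ (Q *ᵥ (x * u)) = ∑ i, ∑ j, Q i j * (x i * u i) * (x j * u j) := by
    simp only [mulVec, dotProduct, Pi.mul_apply, Finset.mul_sum]
    refine Finset.sum_congr rfl fun i _ => Finset.sum_congr rfl fun j _ => ?_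
    ring
  rw [hexpand, hswap, hdiag, hcross]
  ring

theorem re_star_dotProduct_map_ofReal_mulVec (M : Matrix ι ι ℝ) (v : ι → ℂ) :
    (star v ⬝ᵥ (M.map Complex.ofReal *ᵥ v)).re =
      (fun i => (v i).re) ⬝ᵥ (M *ᵥ fun i => (v i).re) +
        (fun i => (v i).im) ⬝ᵥ (M *ᵥ fun i => (v i).im) := by
  simp only [dotProduct, mulVec, Pi.star_apply, map_apply, Complex.re_sum, Finset.mul_sum,
    ← Finset.sum_add_distrib]
  refine Finset.sum_congr rfl fun i _ => Finset.sum_congr rfl fun j _ => ?_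
  simp only [RCLike.star_def, Complex.mul_re, Complex.mul_im, Complex.conj_re, Complex.conj_im,
    Complex.ofReal_re, Complex.ofReal_im]
  ring

theorem PosDef.re_star_dotProduct_map_ofReal_mulVec_pos {M : Matrix ι ι ℝ} (hM : M.PosDef)
    {v : ι → ℂ} (hv : v ≠ 0) : 0 < (star v ⬝ᵥ (M.map Complex.ofReal *ᵥ v)).re := by
  have hform (w : ι → ℝ) : w ⬝ᵥ (M *ᵥ w) = star w ⬝ᵥ (M *ᵥ w) := by rw [star_trivial]
  have hnonneg (w : ι → ℝ) : 0 ≤ w ⬝ᵥ (M *ᵥ w) :=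
    hform w ▸ hM.posSemidef.dotProduct_mulVec_nonneg w
  have hpos {w : ι → ℝ} (hw : w ≠ 0) : 0 < w ⬝ᵥ (M *ᵥ w) := hform w ▸ hM.dotProduct_mulVec_pos hw
  rw [re_star_dotProduct_map_ofReal_mulVec]
  by_cases hre : (fun i => (v i).re) = 0
  · have him : (fun i => (v i).im) ≠ 0 := fun him =>
      hv (funext fun i => Complex.ext (congrFun hre i) (congrFun him i))
    linarith [hnonneg fun i => (v i).re, hpos him]
  · linarith [hpos hre, hnonneg fun i => (v i).im]

theorem spectrum_transpose {K : Type*} [Field K] [DecidableEq ι] (M : Matrix ι ι K) :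
    spectrum K Mᵀ = spectrum K M := by
  ext μ
  simp [mem_spectrum_iff_isRoot_charpoly, charpoly_transpose]

theorem Metzler.transpose {A : Matrix (Fin n) (Fin n) ℝ} (hA : A.Metzler) : Aᵀ.Metzler :=
  fun i j hij => hA j i hij.symm

theorem Hurwitz.transpose {A : Matrix (Fin n) (Fin n) ℝ} (hA : A.Hurwitz) : Aᵀ.Hurwitz := by
  simpa [Hurwitz, transpose_map, spectrum_transpose] using hA

theorem Metzler.posDef_neg_of_mulVec_neg {Q : Matrix (Fin n) (Fin n) ℝ} (hM : Q.Metzler)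
    (hQ : Q.IsSymm) {x : Fin n → ℝ} (hx : ∀ i, 0 < x i) (hQx : ∀ i, (Q *ᵥ x) i < 0) :
    (-Q).PosDef := by
  refine .of_dotProduct_mulVec_pos (isHermitian_iff_isSymm.mpr hQ.neg) fun v hv => ?_
  have hvu : v = x * (v / x) := funext fun i => (mul_div_cancel₀ (v i) (hx i).ne').symm
  obtain ⟨i₀, hi₀⟩ := Function.ne_iff.mp hv
  have hdiag : ∑ i, (v / x) i ^ 2 * x i * (Q *ᵥ x) i < 0 := by
    refine Finset.sum_neg' (fun i _ => ?_) ⟨i₀, Finset.mem_univ _, ?_⟩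
    · exact mul_nonpos_of_nonneg_of_nonpos (by positivity [(hx i).le]) (hQx i).le
    · have : (v / x) i₀ ≠ 0 := div_ne_zero hi₀ (hx i₀).ne'
      exact mul_neg_of_pos_of_neg (by have := hx i₀; positivity) (hQx i₀)
  have hoff : 0 ≤ ∑ i, ∑ j, Q i j * x i * x j * ((v / x) i - (v / x) j) ^ 2 := by
    refine Finset.sum_nonneg fun i _ => Finset.sum_nonneg fun j _ => ?_
    rcases eq_or_ne i j with rfl | hij
    · simp
    · have := hM i j hij; have := hx i; have := hx j; positivity
  rw [star_trivial, neg_mulVec, dotProduct_neg, neg_pos, hvu, hQ.dotProduct_mul_mulVec_mul]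
  linarith

theorem hurwitz_of_posDef_neg_lyapunov {A P : Matrix (Fin n) (Fin n) ℝ} (hP : P.PosDef)
    (hQ : (-(Aᵀ * P + P * A)).PosDef) : A.Hurwitz := by
  intro μ hμ
  set A' := A.map Complex.ofReal
  set P' := P.map Complex.ofReal
  obtain ⟨v, hv⟩ := (Module.End.hasEigenvalue_iff_mem_spectrum (f := toLin' A')).mpr
    (by rwa [spectrum_toLin']) |>.exists_hasEigenvector
  have hAv : A' *ᵥ v = μ • v := by simpa using hv.apply_eq_smul
  have hmap : (-(Aᵀ * P + P * A)).map Complex.ofReal = -(A'ᴴ * P' + P' * A') := by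
    ext i j
    simp [A', P', mul_apply]
  have hform : star v ⬝ᵥ ((-(Aᵀ * P + P * A)).map Complex.ofReal *ᵥ v) =
      -((starRingEnd ℂ μ + μ) * (star v ⬝ᵥ (P' *ᵥ v))) := by
    rw [hmap, neg_mulVec, add_mulVec, ← mulVec_mulVec, ← mulVec_mulVec, hAv, dotProduct_neg,
      dotProduct_add, dotProduct_mulVec (star v) A'ᴴ, ← star_mulVec, hAv, star_smul,
      smul_dotProduct, mulVec_smul, dotProduct_smul, smul_eq_mul, smul_eq_mul, add_mul]
    rfl
  have hPv := hP.re_star_dotProduct_map_ofReal_mulVec_pos hv.2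
  have hQv := hQ.re_star_dotProduct_map_ofReal_mulVec_pos hv.2
  rw [hform, Complex.neg_re, add_comm, Complex.add_conj, Complex.re_ofReal_mul] at hQv
  nlinarith

end Matrix

/-- A Metzler matrix `A` is Hurwitz iff there is a diagonal matrix `P` with positive
diagonal entries such that `AᵀP + PA` is negative definite. -/
theorem metzler_hurwitz_iff_exists_diag_lyapunov {n : ℕ} (A : Matrix (Fin n) (Fin n) ℝ)
    (hA : A.Metzler) :
    A.Hurwitz ↔ ∃ d : Fin n → ℝ, (∀ i, 0 < d i) ∧
      (-(Aᵀ * Matrix.diagonal d + Matrix.diagonal d * A)).PosDef := by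
  refine ⟨fun hH => ?_, fun ⟨d, hd, hQ⟩ =>
    hurwitz_of_posDef_neg_lyapunov (posDef_diagonal_iff.mpr hd) hQ⟩
  obtain ⟨x, hx, hAx⟩ := hA.exists_pos_mulVec_neg hH
  obtain ⟨z, hz, hAz⟩ := hA.transpose.exists_pos_mulVec_neg hH.transpose
  have hd (i : Fin n) : 0 < (z / x) i := div_pos (hz i) (hx i)
  have hdx : diagonal (z / x) *ᵥ x = z := funext fun i => by
    rw [mulVec_diagonal, Pi.div_apply, div_mul_cancel₀ _ (hx i).ne']
  refine ⟨z / x, hd, Metzler.posDef_neg_of_mulVec_neg (fun i j hij => ?_) ?_ hx fun i => ?_⟩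
  · have := hA i j hij; have := hA j i hij.symm; have := hd i; have := hd j
    simp only [Matrix.add_apply, mul_diagonal, diagonal_mul, transpose_apply]
    positivity
  · simp [IsSymm, transpose_mul, add_comm]
  · rw [add_mulVec, ← mulVec_mulVec, ← mulVec_mulVec, hdx, Pi.add_apply, mulVec_diagonal]
    linarith [hAz i, mul_neg_of_pos_of_neg (hd i) (hAx i)]
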